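/- Let F be a closed convex set of density matrices ('free states') and define the max-relative entropy of resource D_max,F(ρ) = log inf{λ ≥ 1 : ρ ≤ λσ for some σ ∈ F}. If E is a CPTNI map that is δ-approximately resource non-generating, i.e. for every σ ∈ F there exists σ' ∈ F with E(σ)/Tr E(σ) ≤ (1+δ)σ', then for any state ρ with Tr E(ρ) > 0: D_max,F(E(ρ)/Tr E(ρ)) ≤ D_max,F(ρ) − log Tr E(ρ) + log(1+δ). -/

import Mathlib

open Matrix Filter ComplexOrder
noncomputable section
open scoped Classical

variable {d : Type*} [Fintype d] [DecidableEq d]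

/-- A density matrix: positive semidefinite with unit trace. -/
def IsDensity (ρ : Matrix d d ℂ) : Prop := ρ.PosSemidef ∧ ρ.trace = 1

/-- Matrix square root (zero if the input is not positive semidefinite). -/
def msqrt (A : Matrix d d ℂ) : Matrix d d ℂ :=
  if h : A.PosSemidef then
    h.1.eigenvectorUnitary.1 * diagonal ((fun x : ℝ => (x : ℂ)) ∘ Real.sqrt ∘ h.1.eigenvalues) *
      (star h.1.eigenvectorUnitary : Matrix d d ℂ) else 0

/-- Trace norm ‖A‖₁ = Tr √(AᴴA). -/
def traceNorm (A : Matrix d d ℂ) : ℝ := (msqrt (Aᴴ * A)).trace.re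

/-- Fidelity F(ρ,σ) = ‖√ρ√σ‖₁². -/
def fidelity (ρ σ : Matrix d d ℂ) : ℝ := (traceNorm (msqrt ρ * msqrt σ)) ^ 2

/-- n-fold tensor power of a state. -/
def tensorPow (ρ : Matrix d d ℂ) (n : ℕ) : Matrix (Fin n → d) (Fin n → d) ℂ :=
  fun i j => ∏ k, ρ (i k) (j k)

/-- Max-relative entropy of resource: D_max,F(ρ) = log₂ inf{λ ≥ 1 : ρ ≤ λσ, σ ∈ F}. -/
def Dmax (F : Set (Matrix d d ℂ)) (ρ : Matrix d d ℂ) : ℝ :=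
  Real.logb 2 (sInf {t : ℝ | 1 ≤ t ∧ ∃ σ ∈ F, (t • σ - ρ).PosSemidef})

/-- Smoothed max-relative entropy of resource. -/
def DmaxSm (F : Set (Matrix d d ℂ)) (η : ℝ) (ρ : Matrix d d ℂ) : ℝ :=
  sInf {x : ℝ | ∃ ρ', IsDensity ρ' ∧ (1 / 2) * traceNorm (ρ - ρ') ≤ η ∧ x = Dmax F ρ'}

variable {e : Type*} [Fintype e] [DecidableEq e]

/-- Choi matrix of a linear map between matrix algebras. -/
def choiMatrix (Φ : Matrix d d ℂ →ₗ[ℂ] Matrix e e ℂ) : Matrix (d × e) (d × e) ℂ :=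
  fun p q => Φ (single p.1 q.1 1) p.2 q.2

/-- Complete positivity via positivity of the Choi matrix. -/
def IsCompletelyPositive (Φ : Matrix d d ℂ →ₗ[ℂ] Matrix e e ℂ) : Prop :=
  (choiMatrix Φ).PosSemidef


section AuxLemmas
set_option linter.unusedSectionVars false
variable {n : Type*} [Fintype n] [DecidableEq n]

lemma psd_smul {A : Matrix n n ℂ} (hA : A.PosSemidef) {c : ℝ} (hc : 0 ≤ c) :
    (c • A).PosSemidef := by
  have h : (c • A) = (c : ℂ) • A := by
    ext i j; simp [Matrix.smul_apply, Complex.real_smul]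
  rw [h]
  constructor
  · show ((c:ℂ) • A)ᴴ = _
    rw [Matrix.conjTranspose_smul, Complex.star_def, Complex.conj_ofReal, hA.1]
  · exact (hA.smul (by exact_mod_cast hc : (0:ℂ) ≤ (c:ℂ))).2

lemma trace_conjTranspose_mul_self_re (B : Matrix n n ℂ) :
    ((Bᴴ * B).trace).re = ∑ i, ∑ j, Complex.normSq (B j i) := by
  have : ((Bᴴ * B).trace) = ∑ i, ∑ j, star (B j i) * B j i := by
    simp [Matrix.trace, Matrix.mul_apply, Matrix.diag, Matrix.conjTranspose_apply]
  rw [this, Complex.re_sum]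
  refine Finset.sum_congr rfl fun i _ => ?_
  rw [Complex.re_sum]
  refine Finset.sum_congr rfl fun j _ => ?_
  simp [Complex.mul_re, Complex.normSq_apply]

open scoped MatrixOrder in
def Matrix.PosSemidef.sqrt {A : Matrix n n ℂ} (_ : A.PosSemidef) : Matrix n n ℂ := CFC.sqrt A

open scoped MatrixOrder in
lemma Matrix.PosSemidef.posSemidef_sqrt {A : Matrix n n ℂ} (hA : A.PosSemidef) :
    hA.sqrt.PosSemidef := (CFC.sqrt_nonneg A).posSemidef

open scoped MatrixOrder in
lemma Matrix.PosSemidef.sqrt_mul_self {A : Matrix n n ℂ} (hA : A.PosSemidef) :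
    hA.sqrt * hA.sqrt = A := CFC.sqrt_mul_sqrt_self A hA.nonneg

lemma psd_decomp {A : Matrix n n ℂ} (hA : A.PosSemidef) : A = hA.sqrtᴴ * hA.sqrt := by
  rw [hA.posSemidef_sqrt.1]; exact hA.sqrt_mul_self.symm

lemma psd_trace_re_nonneg {A : Matrix n n ℂ} (hA : A.PosSemidef) : 0 ≤ A.trace.re := by
  have h := congrArg (fun M : Matrix n n ℂ => (Matrix.trace M).re) (psd_decomp hA)
  rw [h, trace_conjTranspose_mul_self_re]
  exact Finset.sum_nonneg fun i _ => Finset.sum_nonneg fun j _ => Complex.normSq_nonneg _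

lemma psd_trace_re_zero {A : Matrix n n ℂ} (hA : A.PosSemidef) (h0 : A.trace.re = 0) :
    A = 0 := by
  have h := congrArg (fun M : Matrix n n ℂ => (Matrix.trace M).re) (psd_decomp hA)
  rw [h0, trace_conjTranspose_mul_self_re] at h
  have hB : hA.sqrt = 0 := by
    ext j i
    have h1 := (Finset.sum_eq_zero_iff_of_nonneg (fun i _ => Finset.sum_nonneg
      (fun j _ => Complex.normSq_nonneg _))).mp h.symm i (Finset.mem_univ i)
    have h2 := (Finset.sum_eq_zero_iff_of_nonneg (fun j _ => Complex.normSq_nonneg _)).mp h1 j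
      (Finset.mem_univ j)
    simpa using Complex.normSq_eq_zero.mp h2
  rw [psd_decomp hA, hB]; simp

section spectral
variable {A : Matrix n n ℂ}

lemma herm_trace_eq (hH : A.IsHermitian) : A.trace = ∑ i, (hH.eigenvalues i : ℂ) := by
  conv_lhs => rw [hH.spectral_theorem]
  rw [Unitary.conjStarAlgAut_apply]
  rw [Matrix.trace_mul_cycle]
  have hU : star (hH.eigenvectorUnitary : Matrix n n ℂ) * (hH.eigenvectorUnitary : Matrix n n ℂ)
      = 1 := Matrix.mem_unitaryGroup_iff'.mp hH.eigenvectorUnitary.2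
  rw [hU, Matrix.one_mul, Matrix.trace_diagonal]
  rfl

lemma herm_conj_diag (hH : A.IsHermitian) (t : ℝ) :
    t • (1 : Matrix n n ℂ) - A
      = (hH.eigenvectorUnitary : Matrix n n ℂ)
        * Matrix.diagonal (fun i => ((t - hH.eigenvalues i : ℝ) : ℂ))
        * star (hH.eigenvectorUnitary : Matrix n n ℂ) := by
  set U : Matrix n n ℂ := (hH.eigenvectorUnitary : Matrix n n ℂ) with hUdef
  have hU : U * star U = 1 := Matrix.mem_unitaryGroup_iff.mp hH.eigenvectorUnitary.2
  have h1 : Matrix.diagonal (fun i => ((t - hH.eigenvalues i : ℝ) : ℂ))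
      = t • (1 : Matrix n n ℂ) - Matrix.diagonal (RCLike.ofReal ∘ hH.eigenvalues) := by
    rw [← Matrix.diagonal_one, ← Matrix.diagonal_smul, Matrix.diagonal_sub]
    congr 1
    ext i
    push_cast
    simp [Complex.real_smul]
  rw [h1, Matrix.mul_sub, Matrix.sub_mul]
  congr 1
  · rw [Matrix.mul_smul, Matrix.mul_one, Matrix.smul_mul, hU]
  · rw [hUdef]
    exact hH.spectral_theorem

lemma psd_le_trace_smul_one (hA : A.PosSemidef) :
    ((A.trace.re) • (1 : Matrix n n ℂ) - A).PosSemidef := by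
  have hH := hA.1
  rw [herm_conj_diag hH]
  have hd : (Matrix.diagonal (fun i => ((A.trace.re - hH.eigenvalues i : ℝ) : ℂ))).PosSemidef := by
    refine Matrix.posSemidef_diagonal_iff.mpr fun i => ?_
    have htr : A.trace.re = ∑ j, hH.eigenvalues j := by
      rw [herm_trace_eq hH, Complex.re_sum]
      simp
    have : hH.eigenvalues i ≤ A.trace.re := by
      rw [htr]
      exact Finset.single_le_sum (fun j _ => hA.eigenvalues_nonneg j) (Finset.mem_univ i)
    have h0 : (0:ℝ) ≤ A.trace.re - hH.eigenvalues i := by linarith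
    exact_mod_cast Complex.zero_le_real.mpr h0
  have h := hd.mul_mul_conjTranspose_same (hH.eigenvectorUnitary : Matrix n n ℂ)
  rwa [← Matrix.star_eq_conjTranspose] at h

lemma posdef_exists_smul_one_le [Nonempty n] (hA : A.PosDef) :
    ∃ ε : ℝ, 0 < ε ∧ (A - ε • (1 : Matrix n n ℂ)).PosSemidef := by
  have hH := hA.1
  set ε : ℝ := Finset.univ.inf' Finset.univ_nonempty hH.eigenvalues with hε
  set U : Matrix n n ℂ := (hH.eigenvectorUnitary : Matrix n n ℂ) with hUdef
  refine ⟨ε, ?_, ?_⟩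
  · obtain ⟨i, -, hi⟩ := Finset.exists_mem_eq_inf' Finset.univ_nonempty hH.eigenvalues
    rw [hε, hi]
    exact hA.eigenvalues_pos i
  · have h := congrArg Neg.neg (herm_conj_diag hH ε)
    rw [neg_sub] at h
    have h2 : A - ε • (1 : Matrix n n ℂ)
        = U * Matrix.diagonal (fun i => ((hH.eigenvalues i - ε : ℝ) : ℂ)) * star U := by
      have hneg : (-(Matrix.diagonal fun i => ((ε - hH.eigenvalues i : ℝ) : ℂ)))
          = Matrix.diagonal (fun i => ((hH.eigenvalues i - ε : ℝ) : ℂ)) := by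
        ext i j
        by_cases hij : i = j
        · subst hij
          simp only [Matrix.neg_apply, Matrix.diagonal_apply_eq]
          push_cast
          ring
        · simp [Matrix.diagonal_apply_ne _ hij]
      rw [h, ← Matrix.neg_mul, ← Matrix.mul_neg, hneg, hUdef]
    rw [h2]
    have hd : (Matrix.diagonal (fun i => ((hH.eigenvalues i - ε : ℝ) : ℂ))).PosSemidef := by
      refine Matrix.posSemidef_diagonal_iff.mpr fun i => ?_
      have : ε ≤ hH.eigenvalues i := Finset.inf'_le _ (Finset.mem_univ i)
      have h0 : (0:ℝ) ≤ hH.eigenvalues i - ε := by linarith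
      exact_mod_cast Complex.zero_le_real.mpr h0
    have h3 := hd.mul_mul_conjTranspose_same U
    rwa [← Matrix.star_eq_conjTranspose] at h3

end spectral
end AuxLemmas

section CPAux
set_option linter.unusedSectionVars false
set_option maxHeartbeats 1000000
variable {d' : Type*} [Fintype d'] [DecidableEq d']
variable {e' : Type*} [Fintype e'] [DecidableEq e']

lemma cp_apply (Φ : Matrix d' d' ℂ →ₗ[ℂ] Matrix e' e' ℂ) (X : Matrix d' d' ℂ) (a b : e') :
    Φ X a b = ∑ i, ∑ j, X i j * choiMatrix Φ (i, a) (j, b) := by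
  conv_lhs => rw [matrix_eq_sum_single X]
  rw [map_sum, Matrix.sum_apply]
  refine Finset.sum_congr rfl fun i _ => ?_
  rw [map_sum, Matrix.sum_apply]
  refine Finset.sum_congr rfl fun j _ => ?_
  have h : single i j (X i j) = X i j • single i j 1 := by
    rw [Matrix.smul_single, smul_eq_mul, mul_one]
  rw [h, _root_.map_smul, Matrix.smul_apply, smul_eq_mul]
  rfl

lemma sum4_comm {α : Type*} [AddCommMonoid α] (f : d' → d' → d' → (d' × e') → α) :
    ∑ i, ∑ j, ∑ m, ∑ k, f i j m k = ∑ k, ∑ m, ∑ i, ∑ j, f i j m k :=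
  calc ∑ i, ∑ j, ∑ m, ∑ k, f i j m k
      = ∑ i, ∑ j, ∑ k, ∑ m, f i j m k :=
        Finset.sum_congr rfl fun i _ => Finset.sum_congr rfl fun j _ => Finset.sum_comm
    _ = ∑ i, ∑ k, ∑ j, ∑ m, f i j m k :=
        Finset.sum_congr rfl fun i _ => Finset.sum_comm
    _ = ∑ k, ∑ i, ∑ j, ∑ m, f i j m k := Finset.sum_comm
    _ = ∑ k, ∑ i, ∑ m, ∑ j, f i j m k :=
        Finset.sum_congr rfl fun k _ => Finset.sum_congr rfl fun i _ => Finset.sum_comm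
    _ = ∑ k, ∑ m, ∑ i, ∑ j, f i j m k :=
        Finset.sum_congr rfl fun k _ => Finset.sum_comm

lemma cp_psd (Φ : Matrix d' d' ℂ →ₗ[ℂ] Matrix e' e' ℂ) (hΦ : IsCompletelyPositive Φ)
    {X : Matrix d' d' ℂ} (hX : X.PosSemidef) : (Φ X).PosSemidef := by
  have hΦ' : (choiMatrix Φ).PosSemidef := hΦ
  set A := hΦ'.sqrt with hAdef
  have hCA : Aᴴ * A = choiMatrix Φ := by
    rw [hΦ'.posSemidef_sqrt.1]; exact hΦ'.sqrt_mul_self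
  set B := hX.sqrt with hBdef
  have hXB : Bᴴ * B = X := by
    rw [hX.posSemidef_sqrt.1]; exact hX.sqrt_mul_self
  set M : Matrix ((d' × e') × d') e' ℂ := fun p a => ∑ i, B p.2 i * A p.1 (i, a) with hM
  have key : Φ X = Mᴴ * M := by
    ext a b
    rw [cp_apply, Matrix.mul_apply]
    have hLHS : ∑ i, ∑ j, X i j * choiMatrix Φ (i, a) (j, b)
        = ∑ i, ∑ j, ∑ m, ∑ k : d' × e',
            (star (B m i) * B m j) * (star (A k (i, a)) * A k (j, b)) := by
      refine Finset.sum_congr rfl fun i _ => Finset.sum_congr rfl fun j _ => ?_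
      rw [← hXB, ← hCA, Matrix.mul_apply, Matrix.mul_apply, Finset.sum_mul_sum]
      refine Finset.sum_congr rfl fun m _ => Finset.sum_congr rfl fun k _ => ?_
      rw [Matrix.conjTranspose_apply, Matrix.conjTranspose_apply]
    have hRHS : ∑ p : (d' × e') × d', Mᴴ a p * M p b
        = ∑ k : d' × e', ∑ m : d', ∑ i, ∑ j,
            (star (B m i) * B m j) * (star (A k (i, a)) * A k (j, b)) := by
      rw [Fintype.sum_prod_type]
      refine Finset.sum_congr rfl fun k _ => Finset.sum_congr rfl fun m _ => ?_
      rw [Matrix.conjTranspose_apply]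
      show star (∑ i, B m i * A k (i, a)) * (∑ j, B m j * A k (j, b)) = _
      rw [star_sum, Finset.sum_mul_sum]
      refine Finset.sum_congr rfl fun i _ => Finset.sum_congr rfl fun j _ => ?_
      rw [star_mul']
      ring
    rw [hLHS, hRHS, sum4_comm]
  rw [key]
  exact Matrix.posSemidef_conjTranspose_mul_self M

end CPAux

/-- D_max decreases, up to normalization and δ-correction, under
δ-approximately resource non-generating CPTNI maps. -/
theorem dmax_monotone_approx_rng
    {ι : Type*} [Fintype ι] [DecidableEq ι]
    (F : Set (Matrix ι ι ℂ)) (hFne : F.Nonempty) (hFconv : Convex ℝ F)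
    (hFcl : IsClosed F) (hFden : ∀ σ ∈ F, IsDensity σ)
    (hFfull : ∃ σ ∈ F, σ.PosDef)
    (δ : ℝ) (hδ : 0 ≤ δ)
    (E : Matrix ι ι ℂ →ₗ[ℂ] Matrix ι ι ℂ)
    (hCP : IsCompletelyPositive E)
    (hTNI : ∀ X : Matrix ι ι ℂ, X.PosSemidef → (E X).trace.re ≤ X.trace.re)
    (hRNG : ∀ σ ∈ F, ∃ σ' ∈ F,
      ((1 + δ) • σ' - ((E σ).trace.re)⁻¹ • E σ).PosSemidef)
    (ρ : Matrix ι ι ℂ) (hρ : IsDensity ρ) (hEρ : 0 < (E ρ).trace.re) :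
    Dmax F (((E ρ).trace.re)⁻¹ • E ρ)
      ≤ Dmax F ρ - Real.logb 2 ((E ρ).trace.re) + Real.logb 2 (1 + δ) := by
  classical
  rcases isEmpty_or_nonempty ι with hemp | hne
  · exfalso
    have h0 : (E ρ).trace = 0 := by
      simp [Matrix.trace, Finset.univ_eq_empty]
    rw [h0] at hEρ
    simp at hEρ
  set c := (E ρ).trace.re with hc
  have hρPSD := hρ.1
  have hρtr : ρ.trace.re = 1 := by rw [hρ.2]; simp
  have hc1 : c ≤ 1 := by
    have := hTNI ρ hρPSD
    rw [hρtr] at this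
    exact this
  have hcpos : 0 < c := hEρ
  have h1δ : (1:ℝ) ≤ 1 + δ := by linarith
  set k := (1 + δ) / c with hk
  have hk1 : (1:ℝ) ≤ k := by
    rw [hk, le_div_iff₀ hcpos]
    linarith
  have hkpos : 0 < k := lt_of_lt_of_le one_pos hk1
  set S := {t : ℝ | 1 ≤ t ∧ ∃ σ ∈ F, (t • σ - ρ).PosSemidef} with hSdef
  set T := {t : ℝ | 1 ≤ t ∧ ∃ σ ∈ F, (t • σ - c⁻¹ • E ρ).PosSemidef} with hTdef
  obtain ⟨σ0, hσ0F, hσ0pd⟩ := hFfull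
  obtain ⟨ε, hεpos, hεpsd⟩ := posdef_exists_smul_one_le hσ0pd
  have hSne : S.Nonempty := by
    refine ⟨max 1 ε⁻¹, ⟨le_max_left _ _, σ0, hσ0F, ?_⟩⟩
    set t := max 1 ε⁻¹ with htdef
    have ht0 : (0:ℝ) ≤ t := le_trans zero_le_one (le_max_left _ _)
    have ht : ε⁻¹ ≤ t := le_max_right _ _
    have htε : 1 ≤ t * ε := by
      have := mul_le_mul_of_nonneg_right ht (le_of_lt hεpos)
      rwa [inv_mul_cancel₀ (ne_of_gt hεpos)] at this
    have heq : t • σ0 - ρ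
        = t • (σ0 - ε • (1 : Matrix ι ι ℂ))
          + ((t * ε - 1) • (1 : Matrix ι ι ℂ)
            + ((1:ℝ) • (1 : Matrix ι ι ℂ) - ρ)) := by
      module
    rw [heq, ← hρtr]
    exact (psd_smul hεpsd ht0).add
      ((psd_smul Matrix.PosSemidef.one (by linarith)).add (psd_le_trace_smul_one hρPSD))
  have hS1 : 1 ≤ sInf S := le_csInf hSne fun t ht => ht.1
  have hmap : ∀ t ∈ S, k * t ∈ T := by
    rintro t ⟨ht1, σ, hσF, hpsd⟩
    have ht0 : (0:ℝ) ≤ t := le_trans zero_le_one ht1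
    have hσden := hFden σ hσF
    have hσPSD := hσden.1
    have hσtr : σ.trace.re = 1 := by rw [hσden.2]; simp
    have hEσPSD : (E σ).PosSemidef := cp_psd E hCP hσPSD
    set s := (E σ).trace.re with hs
    have hs0 : 0 ≤ s := psd_trace_re_nonneg hEσPSD
    have hs1 : s ≤ 1 := by
      have := hTNI σ hσPSD
      rw [hσtr] at this
      exact this
    obtain ⟨σ', hσ'F, hKey⟩ := hRNG σ hσF
    have hσ'PSD := (hFden σ' hσ'F).1
    have claim1 : ((1 + δ) • σ' - E σ).PosSemidef := by
      have h2 : ((s * (1 + δ)) • σ' - E σ).PosSemidef := by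
        rcases eq_or_lt_of_le hs0 with h0 | hposs
        · have hEσ0 : E σ = 0 := psd_trace_re_zero hEσPSD h0.symm
          rw [hEσ0, ← h0]
          simp only [zero_mul, zero_smul, sub_zero]
          exact Matrix.PosSemidef.zero
        · have h3 := psd_smul hKey hs0
          have heq : s • ((1 + δ) • σ' - s⁻¹ • E σ) = (s * (1 + δ)) • σ' - E σ := by
            rw [smul_sub, smul_smul, smul_smul, mul_inv_cancel₀ (ne_of_gt hposs), one_smul]
          rwa [heq] at h3
      have heq2 : (1 + δ) • σ' - E σ
          = ((1 - s) * (1 + δ)) • σ' + ((s * (1 + δ)) • σ' - E σ) := by module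
      rw [heq2]
      exact (psd_smul hσ'PSD (by nlinarith)).add h2
    have claim2 : (t • E σ - E ρ).PosSemidef := by
      have h4 := cp_psd E hCP hpsd
      rwa [map_sub, LinearMap.map_smul_of_tower] at h4
    refine ⟨?_, σ', hσ'F, ?_⟩
    · calc (1:ℝ) ≤ k := hk1
        _ ≤ k * t := le_mul_of_one_le_right (le_of_lt hkpos) ht1
    · have hk' : k * t = c⁻¹ * (t * (1 + δ)) := by
        rw [hk]
        field_simp
      have heq3 : (k * t) • σ' - c⁻¹ • E ρ
          = c⁻¹ • (t • ((1 + δ) • σ' - E σ) + (t • E σ - E ρ)) := by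
        rw [hk']
        module
      rw [heq3]
      exact psd_smul ((psd_smul claim1 ht0).add claim2) (inv_nonneg.mpr (le_of_lt hcpos))
  have hTne : T.Nonempty := by
    obtain ⟨t, htS⟩ := hSne
    exact ⟨k * t, hmap t htS⟩
  have hT1 : 1 ≤ sInf T := le_csInf hTne fun t ht => ht.1
  have hbound : sInf T ≤ k * sInf S := by
    have hstep : ∀ t ∈ S, sInf T / k ≤ t := by
      intro t htS
      rw [div_le_iff₀ hkpos]
      calc sInf T ≤ k * t := csInf_le ⟨1, fun u hu => hu.1⟩ (hmap t htS)
        _ = t * k := mul_comm _ _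
    have h5 := le_csInf hSne hstep
    rw [div_le_iff₀ hkpos] at h5
    calc sInf T ≤ sInf S * k := h5
      _ = k * sInf S := mul_comm _ _
  show Real.logb 2 (sInf T) ≤ Real.logb 2 (sInf S) - Real.logb 2 c + Real.logb 2 (1 + δ)
  have hTpos : 0 < sInf T := lt_of_lt_of_le one_pos hT1
  have hSpos : 0 < sInf S := lt_of_lt_of_le one_pos hS1
  have hlog1 : Real.logb 2 (sInf T) ≤ Real.logb 2 (k * sInf S) :=
    Real.logb_le_logb_of_le one_lt_two hTpos hbound
  have hlog2 : Real.logb 2 (k * sInf S) = Real.logb 2 k + Real.logb 2 (sInf S) :=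
    Real.logb_mul (ne_of_gt hkpos) (ne_of_gt hSpos)
  have hlog3 : Real.logb 2 k = Real.logb 2 (1 + δ) - Real.logb 2 c := by
    rw [hk]
    exact Real.logb_div (by linarith) (ne_of_gt hcpos)
  linarith
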